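/- Let L_1,...,L_n be linear forms on ℂ^d with positive integer exponents s_1,...,s_n, let 𝒜 be the associated arrangement, and L(𝒜) its intersection lattice. If 𝒢 ⊆ L(𝒜) is a building set for 𝒜, then min_{W ∈ 𝒢} codim(W)/s(W) = min_{W ∈ L(𝒜)} codim(W)/s(W). -/

import Mathlib

open scoped Classical

/-!
As `𝒢 ⊆ L(𝒜)`, only `≥` needs an argument. A hyperplane is a coatom, so the building-set
condition at `C = H i` forces `H i ∈ 𝒢`. Hence every hyperplane containing `C ∈ L(𝒜)` contains a
minimal element of `𝒢` above `C`, which gives `s(C) ≤ ∑ s(G)` over these minimal `G`, while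
transversality gives `codim C = ∑ codim G`. The mediant inequality then produces one such `G`
with `codim G / s(G) ≤ codim C / s(C)`.
-/

open Finset

lemma exists_div_le_div_of_sum_le {ι 𝕜 : Type*} [Field 𝕜] [LinearOrder 𝕜] [IsStrictOrderedRing 𝕜]
    {M : Finset ι} (hM : M.Nonempty) {a b : ι → 𝕜} {A B : 𝕜} (hb : ∀ i ∈ M, 0 ≤ b i)
    (hA : 0 ≤ A) (hB : 0 < B) (hsumA : ∑ i ∈ M, a i ≤ A) (hsumB : B ≤ ∑ i ∈ M, b i) :
    ∃ i ∈ M, a i / b i ≤ A / B := by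
  have hAB : 0 ≤ A / B := div_nonneg hA hB.le
  have hsum : ∑ i ∈ M, a i ≤ ∑ i ∈ M, A / B * b i :=
    calc ∑ i ∈ M, a i ≤ A := hsumA
      _ = A / B * B := (div_mul_cancel₀ A hB.ne').symm
      _ ≤ A / B * ∑ i ∈ M, b i := mul_le_mul_of_nonneg_left hsumB hAB
      _ = ∑ i ∈ M, A / B * b i := mul_sum _ _ _
  obtain ⟨i, hi, hle⟩ := exists_le_of_sum_le hM hsum
  exact ⟨i, hi, div_le_of_le_mul₀ (hb i hi) hAB hle⟩

section BuildingSet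

variable {ι α : Type*}

noncomputable def minimalAbove [PartialOrder α] (𝒢 : Finset α) (C : α) : Finset α :=
  𝒢.filter fun G => C ≤ G ∧ ∀ G' ∈ 𝒢, C ≤ G' → G' ≤ G → G' = G

lemma exists_mem_minimalAbove_le [PartialOrder α] {𝒢 : Finset α} {C G : α} (hG : G ∈ 𝒢)
    (hCG : C ≤ G) : ∃ G₀ ∈ minimalAbove 𝒢 C, G₀ ≤ G := by
  obtain ⟨G₀, hG₀G, hmin⟩ := (𝒢.filter (C ≤ ·)).exists_le_minimal (mem_filter.2 ⟨hG, hCG⟩)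
  obtain ⟨hG₀, hCG₀⟩ := mem_filter.1 hmin.prop
  refine ⟨G₀, mem_filter.2 ⟨hG₀, hCG₀, fun G' hG' hCG' hG'G₀ => ?_⟩, hG₀G⟩
  exact hG'G₀.antisymm (hmin.2 (mem_filter.2 ⟨hG', hCG'⟩) hG'G₀)

lemma mem_of_isCoatom_of_inf_minimalAbove_eq [Lattice α] [OrderTop α] {𝒢 : Finset α} {H : α}
    (hH : IsCoatom H) (hbuild : (minimalAbove 𝒢 H).inf id = H) : H ∈ 𝒢 := by
  obtain ⟨G, hG, hGtop⟩ : ∃ G ∈ minimalAbove 𝒢 H, G ≠ ⊤ := by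
    by_contra! h
    exact hH.1 (hbuild ▸ (Finset.inf_eq_top_iff _ _).2 h)
  obtain ⟨hG𝒢, hHG, -⟩ := mem_filter.1 hG
  exact (hH.le_iff.1 hHG).resolve_left hGtop ▸ hG𝒢

noncomputable def arrangementWeight [Fintype ι] [LE α] (H : ι → α) (s : ι → ℕ) (W : α) : ℕ :=
  ∑ j ∈ univ.filter (fun j => W ≤ H j), s j

lemma arrangementWeight_pos [Fintype ι] [LE α] {H : ι → α} {s : ι → ℕ} (hs : ∀ i, 0 < s i)
    {W : α} {j : ι} (hW : W ≤ H j) : 0 < arrangementWeight H s W :=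
  (hs j).trans_le (single_le_sum (fun _ _ => Nat.zero_le _) (mem_filter.2 ⟨mem_univ j, hW⟩))

lemma arrangementWeight_le_sum [Fintype ι] [LE α] (H : ι → α) (s : ι → ℕ) {C : α}
    {M : Finset α} (hcover : ∀ j, C ≤ H j → ∃ G ∈ M, G ≤ H j) :
    arrangementWeight H s C ≤ ∑ G ∈ M, arrangementWeight H s G := by
  simp only [arrangementWeight, sum_filter]
  rw [sum_comm]
  refine sum_le_sum fun j _ => ?_
  split_ifs with hCj
  · obtain ⟨G, hG, hGj⟩ := hcover j hCj
    simpa [hGj] using single_le_sum (f := fun G => if G ≤ H j then s j else 0)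
      (fun _ _ => Nat.zero_le _) hG
  · exact Nat.zero_le _

lemma exists_mem_div_arrangementWeight_le [Fintype ι] [PartialOrder α]
    {H : ι → α} {s : ι → ℕ} (hs : ∀ i, 0 < s i) {𝒢 : Finset α} (hH𝒢 : ∀ i, H i ∈ 𝒢)
    {codim : α → ℕ} {C : α} {j : ι} (hCj : C ≤ H j)
    (hcodim : codim C = ∑ G ∈ minimalAbove 𝒢 C, codim G) :
    ∃ G ∈ 𝒢, (codim G : ℝ) / arrangementWeight H s G ≤ codim C / arrangementWeight H s C := by
  have hcover : ∀ i, C ≤ H i → ∃ G ∈ minimalAbove 𝒢 C, G ≤ H i :=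
    fun i hCi => exists_mem_minimalAbove_le (hH𝒢 i) hCi
  obtain ⟨G₀, hG₀, -⟩ := hcover j hCj
  obtain ⟨G, hG, hle⟩ := exists_div_le_div_of_sum_le (a := fun G => (codim G : ℝ))
    (b := fun G => (arrangementWeight H s G : ℝ)) ⟨G₀, hG₀⟩ (fun _ _ => Nat.cast_nonneg _)
    (Nat.cast_nonneg _) (Nat.cast_pos.2 (arrangementWeight_pos hs hCj))
    (by exact_mod_cast hcodim.ge) (by exact_mod_cast arrangementWeight_le_sum H s hcover)
  exact ⟨G, (mem_filter.1 hG).1, hle⟩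

end BuildingSet

lemma Submodule.isCoatom_of_finrank_add_one {K V : Type*} [DivisionRing K] [AddCommGroup V]
    [Module K V] [FiniteDimensional K V] {W : Submodule K V}
    (hW : Module.finrank K W + 1 = Module.finrank K V) : IsCoatom W := by
  refine ⟨fun hWtop => ?_, fun U hWU => eq_top_of_finrank_eq ?_⟩
  · rw [hWtop, finrank_top] at hW
    omega
  · have := finrank_lt_finrank_of_lt hWU
    have := finrank_le U
    omega

theorem stmt_13 (d n : ℕ)
    (H : Fin n → Submodule ℂ (Fin d → ℂ))
    (hH : ∀ i, Module.finrank ℂ (H i) + 1 = d)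
    (s : Fin n → ℕ) (hs : ∀ i, 1 ≤ s i)
    (L : Set (Submodule ℂ (Fin d → ℂ)))
    (hL : L = {W | ∃ S : Finset (Fin n), S.Nonempty ∧ W = ⨅ i ∈ S, H i})
    (𝒢 : Finset (Submodule ℂ (Fin d → ℂ))) (h𝒢L : ↑𝒢 ⊆ L)
    -- building set condition: for every C in the intersection lattice, the minimal
    -- elements of 𝒢 containing C intersect transversally with intersection C
    (hbuild : ∀ C ∈ L,
      (𝒢.filter (fun G => C ≤ G ∧ ∀ G' ∈ 𝒢, C ≤ G' → G' ≤ G → G' = G)).inf id = C ∧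
      d - Module.finrank ℂ C =
        ∑ G ∈ 𝒢.filter (fun G => C ≤ G ∧ ∀ G' ∈ 𝒢, C ≤ G' → G' ≤ G → G' = G),
          (d - Module.finrank ℂ G))
    (ratio : Submodule ℂ (Fin d → ℂ) → ℝ)
    (hratio : ratio = fun (W : Submodule ℂ (Fin d → ℂ)) =>
      ((d - Module.finrank ℂ W : ℕ) : ℝ) /
        (∑ j ∈ Finset.univ.filter (fun j => W ≤ H j), s j : ℕ)) :
    sInf (ratio '' ↑𝒢) = sInf (ratio '' L) := by
  have hHL : ∀ i, H i ∈ L := fun i => hL ▸ ⟨{i}, singleton_nonempty i, by simp⟩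
  have hH𝒢 : ∀ i, H i ∈ 𝒢 := fun i =>
    mem_of_isCoatom_of_inf_minimalAbove_eq
      (Submodule.isCoatom_of_finrank_add_one (by rw [hH i, Module.finrank_fin_fun]))
      (hbuild _ (hHL i)).1
  subst hratio
  refine csInf_eq_csInf_of_forall_exists_le ?_ ?_
  · rintro _ ⟨G, hG, rfl⟩
    exact ⟨_, ⟨G, h𝒢L hG, rfl⟩, le_rfl⟩
  · rintro _ ⟨C, hC, rfl⟩
    obtain ⟨S, ⟨j, hj⟩, rfl⟩ := hL ▸ hC
    obtain ⟨G, hG, hle⟩ :=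
      exists_mem_div_arrangementWeight_le (codim := fun W => d - Module.finrank ℂ W) hs hH𝒢
        (iInf₂_le j hj) (hbuild _ hC).2
    exact ⟨_, ⟨G, hG, rfl⟩, hle⟩
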